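/- For all r, s ∈ ℕ there exists l = l(r,s) ∈ ℕ such that whenever A is an IP*_r set in 𝒫_f(ℕ) and B is an IP*_s set in 𝒫_f(ℕ), the intersection A ∩ B is an IP*_l set in 𝒫_f(ℕ). -/

import Mathlib

open Finset

/-- The word `a 0 * f (t 0) * a 1 * f (t 1) * ⋯ * a (m-1) * f (t (m-1)) * a m`. -/
def crWord {S : Type*} [Semigroup S] (m : ℕ) (a : Fin (m + 1) → S) (t : Fin m → ℕ)
    (f : ℕ → S) : S :=
  (List.finRange m).foldl (fun x i => x * f (t i) * a i.succ) (a 0)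

/-- `A` is a combinatorially rich (CR) set in the semigroup `S`. -/
def IsCRSet {S : Type*} [Semigroup S] (A : Set S) : Prop :=
  ∀ k : ℕ, ∃ r : ℕ, ∀ F : Finset (ℕ → S), F.Nonempty → F.card ≤ k →
    ∃ m : ℕ, 0 < m ∧ ∃ a : Fin (m + 1) → S, ∃ t : Fin m → ℕ,
      StrictMono t ∧ (∀ i, t i ≤ r) ∧ ∀ f ∈ F, crWord m a t f ∈ A

/-- An increasing block sequence of nonempty finite subsets of ℕ:
each block is nonempty and every element of an earlier block is less
than every element of a later block (equivalently `max H_n < min H_{n+1}`). -/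
def BlockSeq {r : ℕ} (H : Fin r → Finset ℕ) : Prop :=
  (∀ n, (H n).Nonempty) ∧ ∀ i j : Fin r, i < j → ∀ x ∈ H i, ∀ y ∈ H j, x < y

/-- Finite unions of a finite block sequence. -/
def FU {r : ℕ} (H : Fin r → Finset ℕ) : Set (Finset ℕ) :=
  {L | ∃ K : Finset (Fin r), K.Nonempty ∧ L = K.biUnion H}

def IsIPr (r : ℕ) (B : Set (Finset ℕ)) : Prop :=
  ∃ H : Fin r → Finset ℕ, BlockSeq H ∧ B = FU H

def IsIPrStar (r : ℕ) (A : Set (Finset ℕ)) : Prop :=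
  ∀ B : Set (Finset ℕ), IsIPr r B → (A ∩ B).Nonempty

def BlockSeqInf (H : ℕ → Finset ℕ) : Prop :=
  (∀ n, (H n).Nonempty) ∧ ∀ i j : ℕ, i < j → ∀ x ∈ H i, ∀ y ∈ H j, x < y

def IsIP (B : Set (Finset ℕ)) : Prop :=
  ∃ H : ℕ → Finset ℕ, BlockSeqInf H ∧
    B = {L | ∃ K : Finset ℕ, K.Nonempty ∧ L = K.biUnion H}

def IsIPStar (A : Set (Finset ℕ)) : Prop :=
  ∀ B : Set (Finset ℕ), IsIP B → (A ∩ B).Nonempty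

/-- `Θ(A,F)`: the nonempty finite sets `L = {t(1) < … < t(m)}` for which there is
`a ∈ S^{m+1}` with `a(1)·f(t(1))·a(2)⋯a(m)·f(t(m))·a(m+1) ∈ A` for all `f ∈ F`. -/
def Theta {S : Type*} [Semigroup S] (A : Set S) (F : Finset (ℕ → S)) : Set (Finset ℕ) :=
  {L | L.Nonempty ∧ ∃ a : Fin (L.card + 1) → S,
    ∀ f ∈ F, crWord L.card a (fun i => ((L.orderIsoOfFin rfl) i : ℕ)) f ∈ A}

/-! Folkman's finite unions theorem gives `l` such that for every colouring of `𝒫_f(ℕ)` by `A`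
and its complement there are `max r s` blocks below `l` whose finite unions are monochromatic.
Substituting these blocks into the blocks `H_0, …, H_{l-1}` of an IP_l set gives an IP_{max r s}
subsystem `G`; its finite unions lie in `A`, since its first `r` blocks already meet `A`, and its
first `s` blocks meet `B`. The finite unions theorem is the compactness form of its infinite
version, which is Hindman's theorem in the semigroup `OrderedUnion`. -/

open Hindman

def Precedes (x y : Finset ℕ) : Prop := ∀ a ∈ x, ∀ b ∈ y, a < b

instance : DecidableRel Precedes := fun x y => by unfold Precedes; infer_instance

lemma precedes_union_left {x y z : Finset ℕ} :
    Precedes (x ∪ y) z ↔ Precedes x z ∧ Precedes y z := by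
  simp only [Precedes, mem_union]; grind

lemma precedes_union_right {x y z : Finset ℕ} :
    Precedes x (y ∪ z) ↔ Precedes x y ∧ Precedes x z := by
  simp only [Precedes, mem_union]; grind

/-- The partial semigroup of ordered unions (`x · y = x ∪ y`, defined only when `max x < min y`),
made total by an absorbing `zero` so that Hindman's theorem applies: an FP-set avoiding `zero`
is a system of finite unions of blocks. -/
inductive OrderedUnion
  | zero
  | of (x : Finset ℕ)

namespace OrderedUnion

def mul : OrderedUnion → OrderedUnion → OrderedUnion
  | of x, of y => if Precedes x y then of (x ∪ y) else zero
  | _, _ => zero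

instance : Semigroup OrderedUnion where
  mul := mul
  mul_assoc a b c := by
    change mul (mul a b) c = mul a (mul b c)
    rcases a with _ | x <;> rcases b with _ | y <;> rcases c with _ | z <;> simp only [mul]
    · split_ifs <;> rfl
    · by_cases hxy : Precedes x y <;> by_cases hyz : Precedes y z <;>
        simp [hxy, hyz, precedes_union_left, precedes_union_right, union_assoc]

lemma of_mul_of (x y : Finset ℕ) :
    of x * of y = if Precedes x y then of (x ∪ y) else zero := rfl

end OrderedUnion

open OrderedUnion

lemma FP_shifted_singletons_subset (j : ℕ) :
    FP (fun i => of {i + j}) ⊆ of '' {K | K.Nonempty ∧ ∀ x ∈ K, j ≤ x} := by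
  intro m hm
  generalize ha : (fun i => of {i + j} : Stream' OrderedUnion) = a at hm
  induction hm generalizing j with
  | head' a =>
    subst ha
    exact ⟨{j}, ⟨singleton_nonempty j, by simp⟩, by simp [Stream'.head, Stream'.get]⟩
  | tail' a m _ ih =>
    obtain ⟨K, ⟨hK, hKj⟩, rfl⟩ :=
      ih (j + 1) (by subst ha; funext i; simp [Stream'.tail, Stream'.get]; omega)
    exact ⟨K, ⟨hK, fun x hx => Nat.le_of_succ_le (hKj x hx)⟩, rfl⟩
  | cons' a m _ ih =>
    obtain ⟨K, ⟨hK, hKj⟩, rfl⟩ :=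
      ih (j + 1) (by subst ha; funext i; simp [Stream'.tail, Stream'.get]; omega)
    subst ha
    have hjK : Precedes {j} K := by simpa [Precedes] using hKj
    refine ⟨{j} ∪ K, ⟨by simp, ?_⟩, by simp [Stream'.head, Stream'.get, of_mul_of, hjK]⟩
    simp only [mem_union, mem_singleton]
    rintro x (rfl | hx)
    exacts [le_rfl, Nat.le_of_succ_le (hKj x hx)]

lemma of_biUnion_mem_FP {b : Stream' OrderedUnion} {H : ℕ → Finset ℕ} (hb : ∀ i, b.get i = of (H i))
    (hH : ∀ i j, i < j → Precedes (H i) (H j)) {K : Finset ℕ} (hK : K.Nonempty) :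
    of (K.biUnion H) ∈ FP b := by
  suffices key : ∀ m, (∀ x ∈ K, m ≤ x) → of (K.biUnion H) ∈ FP (b.drop m) from
    key 0 (fun _ _ => Nat.zero_le _)
  induction K using Finset.induction_on_min with
  | empty => exact absurd hK not_nonempty_empty
  | insert a s has ih =>
    intro m hm
    have hma : m ≤ a := hm a (mem_insert_self a s)
    suffices of ((insert a s).biUnion H) ∈ FP (b.drop a) by
      have := FP_drop_subset_FP (b.drop m) (a - m)
      rw [Stream'.drop_drop, Nat.add_sub_cancel' hma] at this
      exact this ‹_›
    have hhead : (b.drop a).head = of (H a) := by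
      rw [Stream'.head_drop]; exact hb a
    rcases s.eq_empty_or_nonempty with rfl | hs
    · simpa [hhead] using FP.head (b.drop a)
    · have hrest := ih hs (a + 1) has
      rw [← Stream'.tail_drop'] at hrest
      have hprec : Precedes (H a) (s.biUnion H) := by
        intro x hx y hy
        obtain ⟨i, hi, hyi⟩ := mem_biUnion.mp hy
        exact hH a i (has i hi) x hx y hyi
      have := FP.cons _ _ hrest
      rwa [hhead, of_mul_of, if_pos hprec, ← biUnion_insert] at this

lemma exists_isIP_subset_of_FP_subset {b : Stream' OrderedUnion} {S : Set (Finset ℕ)}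
    (hS : ∀ K ∈ S, K.Nonempty) (hb : FP b ⊆ of '' S) : ∃ B, IsIP B ∧ B ⊆ S := by
  choose H hHS hHb using fun i => hb (FP.singleton b i)
  have hprec : ∀ i j, i < j → Precedes (H i) (H j) := by
    intro i j hij
    obtain ⟨x, -, hx⟩ := hb (FP.mul_two b i j hij)
    rw [← hHb i, ← hHb j, of_mul_of] at hx
    by_contra h
    rw [if_neg h] at hx
    exact OrderedUnion.noConfusion hx
  refine ⟨_, ⟨H, ⟨fun i => hS _ (hHS i), hprec⟩, rfl⟩, ?_⟩
  rintro _ ⟨K, hK, rfl⟩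
  obtain ⟨L, hL, hLK⟩ := hb (of_biUnion_mem_FP (fun i => (hHb i).symm) hprec hK)
  exact of.inj hLK ▸ hL

theorem exists_isIP_subset_or_subset_compl (C : Set (Finset ℕ)) :
    ∃ B, IsIP B ∧ (B ⊆ C ∨ B ⊆ Cᶜ) := by
  obtain ⟨c, hc, b, hb⟩ := FP_partition_regular (fun i => of {i})
    {of '' {K | K.Nonempty ∧ K ∈ C}, of '' {K | K.Nonempty ∧ K ∉ C}} (Set.toFinite _) (by
      intro m hm
      obtain ⟨K, ⟨hK, -⟩, rfl⟩ := FP_shifted_singletons_subset 0 hm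
      by_cases hKC : K ∈ C
      · exact Set.mem_sUnion.mpr ⟨_, Set.mem_insert _ _, K, ⟨hK, hKC⟩, rfl⟩
      · exact Set.mem_sUnion.mpr ⟨_, Set.mem_insert_of_mem _ rfl, K, ⟨hK, hKC⟩, rfl⟩)
  rcases hc with rfl | rfl
  · obtain ⟨B, hB, hBC⟩ := exists_isIP_subset_of_FP_subset (fun K hK => hK.1) hb
    exact ⟨B, hB, .inl fun L hL => (hBC hL).2⟩
  · obtain ⟨B, hB, hBC⟩ := exists_isIP_subset_of_FP_subset (fun K hK => hK.1) hb
    exact ⟨B, hB, .inr fun L hL => (hBC hL).2⟩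

lemma Ultrafilter.eventually_iff_eventually {α : Type*} (f : Ultrafilter α) (p : α → Prop) :
    ∀ᶠ x in f, (p x ↔ ∀ᶠ y in f, p y) := by
  by_cases h : ∀ᶠ y in f, p y
  · filter_upwards [h] with x hx using iff_of_true hx h
  · filter_upwards [Ultrafilter.eventually_not.mpr h] with x hx using iff_of_false hx h

theorem exists_bound_blockSeq_FU_subset_or_subset_compl (k : ℕ) :
    ∃ n, ∀ C : Set (Finset ℕ), ∃ G : Fin k → Finset ℕ,
      BlockSeq G ∧ (∀ i, G i ⊆ range n) ∧ (FU G ⊆ C ∨ FU G ⊆ Cᶜ) := by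
  -- Counterexample colourings `Cs n` converge along an ultrafilter to a colouring contradicting
  -- the infinite version.
  by_contra! hbad
  choose Cs hCs using hbad
  let V := Filter.hyperfilter ℕ
  let C : Set (Finset ℕ) := {L | ∀ᶠ n in V, L ∈ Cs n}
  obtain ⟨_, ⟨H, hH, rfl⟩, hmono⟩ := exists_isIP_subset_or_subset_compl C
  let G : Fin k → Finset ℕ := fun i => H i
  have hG : BlockSeq G := ⟨fun i => hH.1 i, fun i j hij => hH.2 i j hij⟩
  have hGH : FU G ⊆ {L | ∃ K : Finset ℕ, K.Nonempty ∧ L = K.biUnion H} := by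
    rintro _ ⟨K, hK, rfl⟩
    exact ⟨K.map Fin.valEmbedding, hK.map, by rw [map_eq_image, image_biUnion]; rfl⟩
  obtain ⟨N, hN⟩ := exists_nat_subset_range (univ.biUnion G)
  have hagree : ∀ᶠ n in V, ∀ K : Finset (Fin k), K.biUnion G ∈ Cs n ↔ K.biUnion G ∈ C :=
    Filter.eventually_all.mpr fun K => V.eventually_iff_eventually _
  have hlarge : ∀ᶠ n in V, N ≤ n :=
    Filter.Eventually.filter_mono Nat.hyperfilter_le_atTop (Filter.eventually_ge_atTop N)
  obtain ⟨n, hn, hNn⟩ := (hagree.and hlarge).exists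
  have hn' : ∀ L ∈ FU G, L ∈ Cs n ↔ L ∈ C := by
    rintro _ ⟨K, -, rfl⟩
    exact hn K
  have hGn : ∀ i, G i ⊆ range n := fun i =>
    ((subset_biUnion_of_mem G (mem_univ i)).trans hN).trans (range_subset_range.mpr hNn)
  refine not_or.mpr (hCs n G hG hGn) ?_
  rcases hmono with hC | hC
  · exact .inl fun L hL => (hn' L hL).mpr (hC (hGH hL))
  · exact .inr fun L hL h => hC (hGH hL) ((hn' L hL).mp h)

section Substitution

variable {n k : ℕ} {H : Fin n → Finset ℕ} {G : Fin k → Finset ℕ}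

def extendByEmpty (H : Fin n → Finset ℕ) (x : ℕ) : Finset ℕ :=
  if h : x < n then H ⟨x, h⟩ else ∅

lemma mem_extendByEmpty {x y : ℕ} : y ∈ extendByEmpty H x ↔ ∃ h : x < n, y ∈ H ⟨x, h⟩ := by
  unfold extendByEmpty
  split_ifs with h <;> simp [h]

lemma biUnion_extendByEmpty_mem_FU {L : Finset ℕ} (hL : L.Nonempty) (hLn : L ⊆ range n) :
    L.biUnion (extendByEmpty H) ∈ FU H := by
  have hLn' : ∀ x ∈ L, x < n := fun x hx => mem_range.mp (hLn hx)
  refine ⟨L.attachFin hLn', by simpa [← card_pos] using hL, ?_⟩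
  ext y
  simp only [mem_biUnion, mem_extendByEmpty, mem_attachFin]
  constructor
  · rintro ⟨x, hx, hxn, hy⟩
    exact ⟨⟨x, hxn⟩, hx, hy⟩
  · rintro ⟨⟨x, hxn⟩, hx, hy⟩
    exact ⟨x, hx, hxn, hy⟩

lemma FU_biUnion_extendByEmpty :
    FU (fun i => (G i).biUnion (extendByEmpty H)) =
      (fun L => L.biUnion (extendByEmpty H)) '' FU G := by
  ext L
  simp only [FU, Set.mem_ofPred_eq, Set.mem_image]
  constructor
  · rintro ⟨K, hK, rfl⟩
    exact ⟨_, ⟨K, hK, rfl⟩, biUnion_biUnion _ _ _⟩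
  · rintro ⟨_, ⟨K, hK, rfl⟩, rfl⟩
    exact ⟨K, hK, biUnion_biUnion _ _ _⟩

lemma BlockSeq.biUnion_extendByEmpty (hH : BlockSeq H) (hG : BlockSeq G)
    (hGn : ∀ i, G i ⊆ range n) : BlockSeq fun i => (G i).biUnion (extendByEmpty H) := by
  refine ⟨fun i => ?_, fun i j hij a ha b hb => ?_⟩
  · obtain ⟨x, hx⟩ := hG.1 i
    have hxn := mem_range.mp (hGn i hx)
    obtain ⟨y, hy⟩ := hH.1 ⟨x, hxn⟩
    exact ⟨y, mem_biUnion.mpr ⟨x, hx, mem_extendByEmpty.mpr ⟨hxn, hy⟩⟩⟩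
  · obtain ⟨x, hx, hxn, ha⟩ : ∃ x ∈ G i, ∃ h : x < n, a ∈ H ⟨x, h⟩ := by
      simpa [mem_extendByEmpty] using ha
    obtain ⟨y, hy, hyn, hb⟩ : ∃ y ∈ G j, ∃ h : y < n, b ∈ H ⟨y, h⟩ := by
      simpa [mem_extendByEmpty] using hb
    exact hH.2 _ _ (Fin.mk_lt_mk.mpr (hG.2 i j hij x hx y hy)) a ha b hb

lemma FU_biUnion_extendByEmpty_subset (hG : BlockSeq G) (hGn : ∀ i, G i ⊆ range n) :
    FU (fun i => (G i).biUnion (extendByEmpty H)) ⊆ FU H := by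
  rw [FU_biUnion_extendByEmpty]
  rintro _ ⟨_, ⟨K, ⟨i, hi⟩, rfl⟩, rfl⟩
  exact biUnion_extendByEmpty_mem_FU ((hG.1 i).mono (subset_biUnion_of_mem G hi))
    (biUnion_subset.mpr fun i _ => hGn i)

end Substitution

lemma BlockSeq.comp_castLE {m k : ℕ} {H : Fin k → Finset ℕ} (hH : BlockSeq H) (h : m ≤ k) :
    BlockSeq (H ∘ Fin.castLE h) :=
  ⟨fun _ => hH.1 _, fun _ _ hij => hH.2 _ _ (Fin.strictMono_castLE h hij)⟩

lemma FU_comp_castLE_subset {m k : ℕ} (H : Fin k → Finset ℕ) (h : m ≤ k) :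
    FU (H ∘ Fin.castLE h) ⊆ FU H := by
  rintro _ ⟨K, hK, rfl⟩
  exact ⟨K.image (Fin.castLE h), hK.image _, by rw [image_biUnion]; rfl⟩

lemma IsIPrStar.inter_FU_nonempty {r k : ℕ} {A : Set (Finset ℕ)} {H : Fin k → Finset ℕ}
    (hA : IsIPrStar r A) (hH : BlockSeq H) (hrk : r ≤ k) : (A ∩ FU H).Nonempty :=
  (hA _ ⟨_, hH.comp_castLE hrk, rfl⟩).mono
    (Set.inter_subset_inter_right _ (FU_comp_castLE_subset H hrk))

theorem IPrStar_inter (r s : ℕ) : ∃ l : ℕ, ∀ A B : Set (Finset ℕ),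
    IsIPrStar r A → IsIPrStar s B → IsIPrStar l (A ∩ B) := by
  obtain ⟨l, hl⟩ := exists_bound_blockSeq_FU_subset_or_subset_compl (max r s)
  refine ⟨l, fun A B hA hB _ ⟨H, hH, hFU⟩ => ?_⟩
  subst hFU
  obtain ⟨G, hG, hGl, hmono⟩ := hl {L | L.biUnion (extendByEmpty H) ∈ A}
  set G' := fun i => (G i).biUnion (extendByEmpty H)
  have hG' : BlockSeq G' := hH.biUnion_extendByEmpty hG hGl
  have hG'A : FU G' ⊆ A := by
    rcases hmono with hmono | hmono
    · rw [FU_biUnion_extendByEmpty]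
      exact Set.image_subset_iff.mpr hmono
    · obtain ⟨_, hxA, hx⟩ := hA.inter_FU_nonempty hG' (le_max_left r s)
      rw [FU_biUnion_extendByEmpty] at hx
      obtain ⟨L, hL, rfl⟩ := hx
      exact absurd hxA (hmono hL)
  obtain ⟨x, hxB, hx⟩ := hB.inter_FU_nonempty hG' (le_max_right r s)
  exact ⟨x, ⟨hG'A hx, hxB⟩, FU_biUnion_extendByEmpty_subset hG hGl hx⟩
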